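/- Let n ≥ 1 and k, l ≥ 0 with k + l ≤ n. Take m = 3, ℓ = 1, Λ = (n,0,0) ∈ ℤ³, and let ū = w̄ be the sequence consisting of k+l entries equal to 1 followed by l entries equal to 2 (length N = k+2l). Then ⟪ū,ū⟫ = q^{−d}·([k+l]!)²·([l]!)²·[k+l choose l]·[n choose k+l], where d = −(n(n−1) − (n−k−l)(n−k−l−1) − k(k−1) − l(l−1))/2. (This is the closed formula evaluation of the digon web: a circle of color k+l carrying a digon with colors k and l, whose evaluation is [k+l choose l]·[n choose k+l] by the digon removal relation.) -/

import Mathlib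

open LaurentPolynomial Finset

noncomputable section

/-- The quantum integer `[a] = q^(a-1) + q^(a-3) + ⋯ + q^(-a+1)` for `a ≥ 0`,
with `[a] = -[-a]` for `a < 0`. -/
def qint (a : ℤ) : LaurentPolynomial ℤ :=
  if 0 ≤ a then ∑ i ∈ Finset.range a.toNat, T (a - 1 - 2 * i)
  else - ∑ i ∈ Finset.range (-a).toNat, T (-a - 1 - 2 * i)

/-- The quantum factorial `[b]! = [b][b-1]⋯[1]`. -/
def qfac (b : ℕ) : LaurentPolynomial ℤ :=
  ∏ i ∈ Finset.range b, qint (i + 1)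

/-- The simple root `α_i = e_i - e_{i+1} ∈ ℤ^m` (with `1 ≤ i ≤ m-1`, one-indexed
entries realized on `Fin m`). -/
def simpleRoot (m i : ℕ) : Fin m → ℤ :=
  fun j => (if (j : ℕ) + 1 = i then 1 else 0) - (if (j : ℕ) = i then 1 else 0)

/-- The standard dot product on `ℤ^m`. -/
def dotP {m : ℕ} (v w : Fin m → ℤ) : ℤ := ∑ j, v j * w j

/-- The highest weight `Λ = (n,…,n,0,…,0)` with `ℓ` entries equal to `n`. -/
def LambdaVec (m n ℓ : ℕ) : Fin m → ℤ := fun j => if (j : ℕ) < ℓ then (n : ℤ) else 0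

/-- `N^Λ(σ, ū, t) = ⟨Λ - ∑_{j ≤ t, σ(j) < σ(t)} α_{ū_j}, α_{ū_t}⟩`. -/
def Nwt {m N : ℕ} (Λ : Fin m → ℤ) (σ : Equiv.Perm (Fin N)) (u : Fin N → ℕ) (t : Fin N) : ℤ :=
  dotP (Λ - ∑ j ∈ Finset.univ.filter (fun j => j ≤ t ∧ σ j < σ t), simpleRoot m (u j))
    (simpleRoot m (u t))

/-- `X_σ = ∏_t [N^Λ(σ,ū,t)]·q^(N^Λ(e,ū,t) - 1)`. -/
def Xsig {m N : ℕ} (Λ : Fin m → ℤ) (σ : Equiv.Perm (Fin N)) (u : Fin N → ℕ) :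
    LaurentPolynomial ℤ :=
  ∏ t : Fin N, qint (Nwt Λ σ u t) * T (Nwt Λ 1 u t - 1)

/-- The set of possible crossings `S_ū^w̄ = {σ : ū_j = w̄_{σ(j)} for all j}`. -/
def Sset {N : ℕ} (u w : Fin N → ℕ) : Finset (Equiv.Perm (Fin N)) :=
  Finset.univ.filter fun σ => ∀ j, u j = w (σ j)

/-- The evaluation `⟪ū, w̄⟫ = ∑_{σ ∈ S_ū^w̄} X_σ`. -/
def pairing {m N : ℕ} (Λ : Fin m → ℤ) (u w : Fin N → ℕ) : LaurentPolynomial ℤ :=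
  ∑ σ ∈ Sset u w, Xsig Λ σ u


/-! ### quantum integer lemmas -/

lemma dd_ne : (T 1 - T (-1) : LaurentPolynomial ℤ) ≠ 0 := by
  intro h
  have h2 : ((T 1 - T (-1) : LaurentPolynomial ℤ)).coeff 1 = (0 : LaurentPolynomial ℤ).coeff 1 := by rw [h]
  rw [AddMonoidAlgebra.coeff_sub, Finsupp.sub_apply] at h2
  simp at h2

lemma dd_mul_qint (a : ℤ) :
    (T 1 - T (-1) : LaurentPolynomial ℤ) * qint a = T a - T (-a) := by
  have key : ∀ b : ℕ, (T 1 - T (-1) : LaurentPolynomial ℤ) *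
      (∑ i ∈ Finset.range b, T ((b : ℤ) - 1 - 2 * i)) = T (b : ℤ) - T (-(b : ℤ)) := by
    intro b
    rw [Finset.mul_sum]
    have h1 : ∀ i : ℕ, (T 1 - T (-1) : LaurentPolynomial ℤ) * T ((b : ℤ) - 1 - 2 * i)
        = T ((b : ℤ) - 2 * (i : ℤ)) - T ((b : ℤ) - 2 * ((i+1 : ℕ) : ℤ)) := by
      intro i
      rw [sub_mul, ← T_add, ← T_add]
      push_cast
      ring_nf
    rw [Finset.sum_congr rfl fun i _ => h1 i,
      Finset.sum_range_sub' (fun i : ℕ => (T ((b : ℤ) - 2 * (i : ℤ)) : LaurentPolynomial ℤ))]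
    push_cast
    ring_nf
  rcases le_or_gt 0 a with h | h
  · have hb : ((a.toNat : ℤ)) = a := Int.toNat_of_nonneg h
    have := key a.toNat
    rw [hb] at this
    rw [qint, if_pos h]
    exact this
  · have hb : (((-a).toNat : ℤ)) = -a := Int.toNat_of_nonneg (by omega)
    have := key (-a).toNat
    rw [hb] at this
    rw [qint, if_neg (not_le.mpr h), mul_neg, this, neg_sub, neg_neg]

lemma sum_qint (t : ℕ) (ν : ℤ) :
    ∑ c ∈ Finset.range (t+1), qint (ν - 2*c) = qint ((t:ℤ)+1) * qint (ν - t) := by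
  apply mul_left_cancel₀ dd_ne
  apply mul_left_cancel₀ dd_ne
  have hR : (T 1 - T (-1) : LaurentPolynomial ℤ) *
        ((T 1 - T (-1)) * (qint ((t:ℤ)+1) * qint (ν - t)))
      = ((T 1 - T (-1)) * qint ((t:ℤ)+1)) * ((T 1 - T (-1)) * qint (ν - t)) := by ring
  rw [hR, dd_mul_qint, dd_mul_qint]
  have hL1 : (T 1 - T (-1) : LaurentPolynomial ℤ) * ∑ c ∈ Finset.range (t+1), qint (ν - 2*c)
      = ∑ c ∈ Finset.range (t+1), (T (ν - 2*c) - T (-(ν - 2*c))) := by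
    rw [Finset.mul_sum]; exact Finset.sum_congr rfl fun c _ => dd_mul_qint _
  rw [hL1, Finset.mul_sum]
  have hterm : ∀ c : ℕ, (T 1 - T (-1) : LaurentPolynomial ℤ) * (T (ν - 2*c) - T (-(ν - 2*c)))
      = ((fun c : ℕ => (T (ν + 1 - 2*(c:ℤ)) : LaurentPolynomial ℤ)) c
          - (fun c : ℕ => (T (ν + 1 - 2*(c:ℤ)) : LaurentPolynomial ℤ)) (c+1))
        + ((fun c : ℕ => (T (2*(c:ℤ) - ν - 1) : LaurentPolynomial ℤ)) c
          - (fun c : ℕ => (T (2*(c:ℤ) - ν - 1) : LaurentPolynomial ℤ)) (c+1)) := by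
    intro c
    simp only []
    rw [sub_mul, mul_sub, mul_sub, ← T_add, ← T_add, ← T_add, ← T_add]
    push_cast
    ring_nf
  rw [Finset.sum_congr rfl fun c _ => hterm c, Finset.sum_add_distrib,
    Finset.sum_range_sub', Finset.sum_range_sub']
  rw [sub_mul, mul_sub, mul_sub, ← T_add, ← T_add, ← T_add, ← T_add]
  push_cast
  ring_nf

/-! ### permutation statistics -/

def stat {M : ℕ} (σ : Equiv.Perm (Fin M)) (t : Fin M) : ℕ :=
  (Finset.univ.filter (fun j => j ≤ t ∧ σ j < σ t)).card

lemma card_lt_fin {M : ℕ} (p : Fin M) :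
    (Finset.univ.filter (fun j : Fin M => j < p)).card = (p : ℕ) := by
  rw [show (Finset.univ.filter (fun j : Fin M => j < p)) = Finset.Iio p by ext j; simp,
    Fin.card_Iio]

lemma stat_one {M : ℕ} (x : Fin M) : stat (1 : Equiv.Perm (Fin M)) x = (x : ℕ) := by
  rw [stat, ← card_lt_fin x]
  congr 1
  apply Finset.filter_congr
  intro j _
  simp only [Equiv.Perm.one_apply]
  exact ⟨fun h => h.2, fun h => ⟨le_of_lt h, h⟩⟩

lemma stat_last {M : ℕ} (σ : Equiv.Perm (Fin (M+1))) :
    stat σ (Fin.last M) = (σ (Fin.last M) : ℕ) := by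
  rw [stat, ← card_lt_fin (σ (Fin.last M))]
  apply Finset.card_bij' (fun j _ => σ j) (fun v _ => σ.symm v)
  · intro a ha; simp only [Finset.mem_filter, Finset.mem_univ, true_and] at ha ⊢
    exact ha.2
  · intro v hv; simp only [Finset.mem_filter, Finset.mem_univ, true_and] at hv ⊢
    exact ⟨Fin.le_last _, by simpa using hv⟩
  · intro a _; simp
  · intro a _; simp

def del {M : ℕ} (σ : Equiv.Perm (Fin (M+1))) : Equiv.Perm (Fin M) :=
  (finSuccAboveEquiv (Fin.last M)).trans
    ((σ.subtypeEquiv (fun _ => not_congr ⟨fun h => h ▸ rfl, fun h => σ.injective h⟩)).trans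
      (finSuccAboveEquiv (σ (Fin.last M))).symm)

lemma del_spec {M : ℕ} (σ : Equiv.Perm (Fin (M+1))) (s : Fin M) :
    (σ (Fin.last M)).succAbove (del σ s) = σ (Fin.castSucc s) := by
  have h1 : ((finSuccAboveEquiv (σ (Fin.last M))) (del σ s) : Fin (M+1))
      = (σ (Fin.last M)).succAbove (del σ s) := by
    rw [finSuccAboveEquiv_apply]
  rw [← h1, del]
  simp only [Equiv.trans_apply, Equiv.apply_symm_apply]
  simp [finSuccAboveEquiv_apply, Equiv.subtypeEquiv, Fin.succAbove_last]

lemma stat_castSucc {M : ℕ} (σ : Equiv.Perm (Fin (M+1))) (s : Fin M) :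
    stat σ (Fin.castSucc s) = stat (del σ) s := by
  rw [stat, stat]
  have hne : ∀ j : Fin (M+1), j ≤ Fin.castSucc s → j ≠ Fin.last M := by
    intro j hj h
    rw [h] at hj
    have := Fin.le_def.mp hj
    simp at this
    omega
  refine Finset.card_bij' (fun j hj => Fin.castPred j (hne j (by
      simp only [Finset.mem_filter] at hj; exact hj.2.1)))
    (fun j _ => Fin.castSucc j) ?_ ?_ ?_ ?_
  · intro a ha
    simp only [Finset.mem_filter, Finset.mem_univ, true_and] at ha ⊢
    obtain ⟨h1, h2⟩ := ha
    refine ⟨?_, ?_⟩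
    · rw [Fin.le_def] at h1 ⊢
      simpa using h1
    · rw [← Fin.succAbove_lt_succAbove_iff (p := σ (Fin.last M)), del_spec, del_spec,
        Fin.castSucc_castPred]
      exact h2
  · intro a ha
    simp only [Finset.mem_filter, Finset.mem_univ, true_and] at ha ⊢
    obtain ⟨h1, h2⟩ := ha
    refine ⟨?_, ?_⟩
    · rw [Fin.le_def] at h1 ⊢
      simpa using h1
    · rw [← del_spec, ← del_spec, Fin.succAbove_lt_succAbove_iff]
      exact h2
  · intro a _; simp
  · intro a _; simp

lemma last_del_bijective (M : ℕ) :
    Function.Bijective (fun σ : Equiv.Perm (Fin (M+1)) => (σ (Fin.last M), del σ)) := by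
  rw [Fintype.bijective_iff_injective_and_card]
  constructor
  · intro σ σ' h
    simp only [Prod.mk.injEq] at h
    obtain ⟨h1, h2⟩ := h
    apply Equiv.ext
    intro t
    rcases Fin.eq_castSucc_or_eq_last t with ⟨s, rfl⟩ | rfl
    · rw [← del_spec, ← del_spec, h1, h2]
    · exact h1
  · simp [Fintype.card_perm, Fintype.card_prod, Nat.factorial_succ]

lemma perm_sum {R : Type*} [CommSemiring R] (M : ℕ) (F : ℕ → R) :
    ∑ σ : Equiv.Perm (Fin M), ∏ t : Fin M, F (stat σ t)
      = ∏ t : Fin M, ∑ c ∈ Finset.range ((t : ℕ) + 1), F c := by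
  induction M with
  | zero => simp
  | succ M ih =>
      have key : ∀ σ : Equiv.Perm (Fin (M+1)),
          ∏ t : Fin (M+1), F (stat σ t)
            = (∏ s : Fin M, F (stat (del σ) s)) * F ((σ (Fin.last M) : ℕ)) := by
        intro σ
        rw [Fin.prod_univ_castSucc]
        congr 1
        · exact Finset.prod_congr rfl fun s _ => by rw [stat_castSucc]
        · rw [stat_last]
      calc ∑ σ : Equiv.Perm (Fin (M+1)), ∏ t : Fin (M+1), F (stat σ t)
          = ∑ σ : Equiv.Perm (Fin (M+1)),
              (∏ s : Fin M, F (stat (del σ) s)) * F ((σ (Fin.last M) : ℕ)) :=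
            Finset.sum_congr rfl fun σ _ => key σ
        _ = ∑ pτ : Fin (M+1) × Equiv.Perm (Fin M),
              (∏ s : Fin M, F (stat pτ.2 s)) * F ((pτ.1 : ℕ)) :=
            Fintype.sum_bijective _ (last_del_bijective M) _ _ (fun σ => rfl)
        _ = (∑ p : Fin (M+1), F ((p : ℕ)))
              * (∑ τ : Equiv.Perm (Fin M), ∏ s : Fin M, F (stat τ s)) := by
            rw [Fintype.sum_prod_type]
            have hp : ∀ p : Fin (M+1),
                ∑ τ : Equiv.Perm (Fin M), (∏ s : Fin M, F (stat τ s)) * F ((p : ℕ))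
                  = (∑ τ : Equiv.Perm (Fin M), ∏ s : Fin M, F (stat τ s)) * F ((p : ℕ)) :=
              fun p => (Finset.sum_mul _ _ _).symm
            rw [Finset.sum_congr rfl fun p _ => hp p, ← Finset.mul_sum, mul_comm]
        _ = (∑ c ∈ Finset.range (M+1), F c)
              * ∏ s : Fin M, ∑ c ∈ Finset.range ((s : ℕ) + 1), F c := by
            rw [ih, Fin.sum_univ_eq_sum_range (fun i => F i)]
        _ = ∏ t : Fin (M+1), ∑ c ∈ Finset.range ((t : ℕ) + 1), F c := by
            rw [Fin.prod_univ_castSucc]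
            simp only [Fin.coe_castSucc, Fin.val_last]
            ring

/-! ### small helpers -/

lemma T_prod {ι : Type*} (S : Finset ι) (f : ι → ℤ) :
    (∏ i ∈ S, (T (f i) : LaurentPolynomial ℤ)) = T (∑ i ∈ S, f i) := by
  classical
  induction S using Finset.cons_induction with
  | empty => simp
  | cons a S ha ih => rw [Finset.prod_cons, Finset.sum_cons, ih, ← T_add]

lemma sumAux (M : ℕ) (ν : ℤ) :
    ∑ i ∈ Finset.range M, (ν - 2*(i:ℤ) - 1) = M*ν - M*M := by
  induction M with
  | zero => simp
  | succ M ih => rw [Finset.sum_range_succ, ih]; push_cast; ring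

/-- One block: sum over all permutations of the weighted product. -/
lemma block_eval (M : ℕ) (ν : ℤ) :
    ∑ σ : Equiv.Perm (Fin M),
        ∏ x : Fin M, qint (ν - 2*(stat σ x : ℤ)) * T (ν - 2*((x:ℕ):ℤ) - 1)
      = T ((M:ℤ)*ν - (M:ℤ)*(M:ℤ)) *
          (qfac M * ∏ i ∈ Finset.range M, qint (ν - (i:ℤ))) := by
  have hT : (∏ x : Fin M, (T (ν - 2*((x:ℕ):ℤ) - 1) : LaurentPolynomial ℤ))
      = T ((M:ℤ)*ν - (M:ℤ)*(M:ℤ)) := by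
    rw [T_prod]
    congr 1
    rw [Fin.sum_univ_eq_sum_range (fun i : ℕ => ν - 2*(i:ℤ) - 1) M]
    exact sumAux M ν
  have h1 : ∀ σ : Equiv.Perm (Fin M),
      ∏ x : Fin M, qint (ν - 2*(stat σ x : ℤ)) * T (ν - 2*((x:ℕ):ℤ) - 1)
        = (∏ x : Fin M, qint (ν - 2*(stat σ x : ℤ))) * T ((M:ℤ)*ν - (M:ℤ)*(M:ℤ)) := by
    intro σ
    rw [Finset.prod_mul_distrib, hT]
  rw [Finset.sum_congr rfl fun σ _ => h1 σ, ← Finset.sum_mul,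
    perm_sum M (fun c => qint (ν - 2*(c:ℤ)))]
  have h2 : ∀ x : Fin M,
      ∑ c ∈ Finset.range ((x:ℕ) + 1), qint (ν - 2*(c:ℤ))
        = qint (((x:ℕ):ℤ)+1) * qint (ν - ((x:ℕ):ℤ)) := fun x => sum_qint (x:ℕ) ν
  rw [Finset.prod_congr rfl fun x _ => h2 x, Finset.prod_mul_distrib,
    Fin.prod_univ_eq_prod_range (fun i : ℕ => qint ((i:ℤ)+1)) M,
    Fin.prod_univ_eq_prod_range (fun i : ℕ => qint (ν - (i:ℤ))) M]
  rw [qfac]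
  have : ∀ i ∈ Finset.range M, qint ((i:ℤ)+1) = qint ((i:ℕ) + 1) := by
    intro i _; norm_num
  rw [Finset.prod_congr rfl this]
  ring
/-! ### the two-block setup -/

def eKL (k l : ℕ) : Fin (k+l) ⊕ Fin l ≃ Fin (k + 2*l) :=
  finSumFinEquiv.trans (finCongr (by ring))

lemma eKL_inl (k l : ℕ) (x : Fin (k+l)) : ((eKL k l (Sum.inl x)) : ℕ) = (x : ℕ) := by
  simp [eKL]

lemma eKL_inr (k l : ℕ) (y : Fin l) : ((eKL k l (Sum.inr y)) : ℕ) = k + l + (y : ℕ) := by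
  simp [eKL]

def uKL (k l : ℕ) : Fin (k + 2*l) → ℕ := fun t => if (t : ℕ) < k + l then 1 else 2

lemma uKL_inl (k l : ℕ) (x : Fin (k+l)) : uKL k l (eKL k l (Sum.inl x)) = 1 := by
  simp [uKL, eKL_inl, x.isLt]

lemma uKL_inr (k l : ℕ) (y : Fin l) : uKL k l (eKL k l (Sum.inr y)) = 2 := by
  simp [uKL, eKL_inr]

def Phi (k l : ℕ) (σ : Equiv.Perm (Fin (k+l))) (τ : Equiv.Perm (Fin l)) :
    Equiv.Perm (Fin (k + 2*l)) :=
  (eKL k l).permCongr (Equiv.sumCongr σ τ)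

lemma Phi_inl (k l : ℕ) (σ : Equiv.Perm (Fin (k+l))) (τ : Equiv.Perm (Fin l)) (x : Fin (k+l)) :
    Phi k l σ τ (eKL k l (Sum.inl x)) = eKL k l (Sum.inl (σ x)) := by
  simp [Phi, Equiv.permCongr_apply]

lemma Phi_inr (k l : ℕ) (σ : Equiv.Perm (Fin (k+l))) (τ : Equiv.Perm (Fin l)) (y : Fin l) :
    Phi k l σ τ (eKL k l (Sum.inr y)) = eKL k l (Sum.inr (τ y)) := by
  simp [Phi, Equiv.permCongr_apply]

lemma Phi_one (k l : ℕ) : Phi k l 1 1 = 1 := by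
  apply Equiv.ext
  intro t
  simp [Phi, Equiv.permCongr_apply]

/-! ### dot product computations -/

lemma dotP_sub {m : ℕ} (a b w : Fin m → ℤ) : dotP (a - b) w = dotP a w - dotP b w := by
  simp [dotP, sub_mul, Finset.sum_sub_distrib]

lemma dotP_sum {m : ℕ} {ι : Type*} (S : Finset ι) (v : ι → Fin m → ℤ) (w : Fin m → ℤ) :
    dotP (∑ i ∈ S, v i) w = ∑ i ∈ S, dotP (v i) w := by
  simp only [dotP, Finset.sum_apply, Finset.sum_mul]
  exact Finset.sum_comm

lemma Nwt_eq {m N : ℕ} (Λ : Fin m → ℤ) (σ : Equiv.Perm (Fin N)) (u : Fin N → ℕ) (t : Fin N) :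
    Nwt Λ σ u t = dotP Λ (simpleRoot m (u t))
      - ∑ j ∈ Finset.univ.filter (fun j => j ≤ t ∧ σ j < σ t),
          dotP (simpleRoot m (u j)) (simpleRoot m (u t)) := by
  rw [Nwt, dotP_sub, dotP_sum]

lemma dotL1 (n : ℕ) : dotP (LambdaVec 3 n 1) (simpleRoot 3 1) = (n : ℤ) := by
  simp [dotP, LambdaVec, simpleRoot, Fin.sum_univ_three]

lemma dotL2 (n : ℕ) : dotP (LambdaVec 3 n 1) (simpleRoot 3 2) = 0 := by
  simp [dotP, LambdaVec, simpleRoot, Fin.sum_univ_three]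

lemma dot11 : dotP (simpleRoot 3 1) (simpleRoot 3 1) = 2 := by
  simp [dotP, simpleRoot, Fin.sum_univ_three]

lemma dot12 : dotP (simpleRoot 3 1) (simpleRoot 3 2) = -1 := by
  simp [dotP, simpleRoot, Fin.sum_univ_three]

lemma dot21 : dotP (simpleRoot 3 2) (simpleRoot 3 1) = -1 := by
  simp [dotP, simpleRoot, Fin.sum_univ_three]

lemma dot22 : dotP (simpleRoot 3 2) (simpleRoot 3 2) = 2 := by
  simp [dotP, simpleRoot, Fin.sum_univ_three]
/-! ### order facts for eKL -/

lemma eKL_inl_le_inl (k l : ℕ) (a b : Fin (k+l)) :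
    eKL k l (Sum.inl a) ≤ eKL k l (Sum.inl b) ↔ a ≤ b := by
  rw [Fin.le_def, Fin.le_def, eKL_inl, eKL_inl]

lemma eKL_inl_lt_inl (k l : ℕ) (a b : Fin (k+l)) :
    eKL k l (Sum.inl a) < eKL k l (Sum.inl b) ↔ a < b := by
  rw [Fin.lt_def, Fin.lt_def, eKL_inl, eKL_inl]

lemma eKL_inr_le_inr (k l : ℕ) (a b : Fin l) :
    eKL k l (Sum.inr a) ≤ eKL k l (Sum.inr b) ↔ a ≤ b := by
  rw [Fin.le_def, Fin.le_def, eKL_inr, eKL_inr]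
  omega

lemma eKL_inr_lt_inr (k l : ℕ) (a b : Fin l) :
    eKL k l (Sum.inr a) < eKL k l (Sum.inr b) ↔ a < b := by
  rw [Fin.lt_def, Fin.lt_def, eKL_inr, eKL_inr]
  omega

lemma eKL_inl_le_inr (k l : ℕ) (a : Fin (k+l)) (b : Fin l) :
    eKL k l (Sum.inl a) ≤ eKL k l (Sum.inr b) := by
  rw [Fin.le_def, eKL_inl, eKL_inr]
  have := a.isLt
  omega

lemma eKL_inl_lt_inr (k l : ℕ) (a : Fin (k+l)) (b : Fin l) :
    eKL k l (Sum.inl a) < eKL k l (Sum.inr b) := by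
  rw [Fin.lt_def, eKL_inl, eKL_inr]
  have := a.isLt
  omega

lemma eKL_not_inr_le_inl (k l : ℕ) (a : Fin l) (b : Fin (k+l)) :
    ¬ (eKL k l (Sum.inr a) ≤ eKL k l (Sum.inl b)) := by
  rw [Fin.le_def, eKL_inr, eKL_inl]
  have := b.isLt
  omega

/-! ### Nwt computations -/

lemma Nwt_Phi_inl (n k l : ℕ) (σ : Equiv.Perm (Fin (k+l))) (τ : Equiv.Perm (Fin l))
    (x : Fin (k+l)) :
    Nwt (LambdaVec 3 n 1) (Phi k l σ τ) (uKL k l) (eKL k l (Sum.inl x))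
      = (n : ℤ) - 2 * (stat σ x : ℤ) := by
  rw [Nwt_eq, uKL_inl, dotL1]
  congr 1
  rw [Finset.sum_filter,
    ← Equiv.sum_comp (eKL k l)
      (fun j => if (j ≤ eKL k l (Sum.inl x)
          ∧ Phi k l σ τ j < Phi k l σ τ (eKL k l (Sum.inl x))) then
        dotP (simpleRoot 3 (uKL k l j)) (simpleRoot 3 1) else 0),
    Fintype.sum_sum_type]
  have hr : ∀ y' : Fin l,
      (if (eKL k l (Sum.inr y') ≤ eKL k l (Sum.inl x)
          ∧ Phi k l σ τ (eKL k l (Sum.inr y')) < Phi k l σ τ (eKL k l (Sum.inl x))) then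
        dotP (simpleRoot 3 (uKL k l (eKL k l (Sum.inr y')))) (simpleRoot 3 1) else 0) = 0 := by
    intro y'
    exact if_neg (fun h => eKL_not_inr_le_inl k l y' x h.1)
  have hl : ∀ x' : Fin (k+l),
      (if (eKL k l (Sum.inl x') ≤ eKL k l (Sum.inl x)
          ∧ Phi k l σ τ (eKL k l (Sum.inl x')) < Phi k l σ τ (eKL k l (Sum.inl x))) then
        dotP (simpleRoot 3 (uKL k l (eKL k l (Sum.inl x')))) (simpleRoot 3 1) else 0)
      = (if (x' ≤ x ∧ σ x' < σ x) then (2:ℤ) else 0) := by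
    intro x'
    refine if_congr ?_ (by rw [uKL_inl, dot11]) rfl
    rw [Phi_inl, Phi_inl, eKL_inl_le_inl, eKL_inl_lt_inl]
  rw [Finset.sum_congr rfl fun x' _ => hl x', Finset.sum_congr rfl fun y' _ => hr y',
    Finset.sum_const_zero, add_zero, ← Finset.sum_filter, Finset.sum_const, nsmul_eq_mul,
    stat]
  ring

lemma Nwt_Phi_inr (n k l : ℕ) (σ : Equiv.Perm (Fin (k+l))) (τ : Equiv.Perm (Fin l))
    (y : Fin l) :
    Nwt (LambdaVec 3 n 1) (Phi k l σ τ) (uKL k l) (eKL k l (Sum.inr y))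
      = ((k : ℤ) + (l : ℤ)) - 2 * (stat τ y : ℤ) := by
  rw [Nwt_eq, uKL_inr, dotL2]
  rw [Finset.sum_filter,
    ← Equiv.sum_comp (eKL k l)
      (fun j => if (j ≤ eKL k l (Sum.inr y)
          ∧ Phi k l σ τ j < Phi k l σ τ (eKL k l (Sum.inr y))) then
        dotP (simpleRoot 3 (uKL k l j)) (simpleRoot 3 2) else 0),
    Fintype.sum_sum_type]
  have hl : ∀ x' : Fin (k+l),
      (if (eKL k l (Sum.inl x') ≤ eKL k l (Sum.inr y)
          ∧ Phi k l σ τ (eKL k l (Sum.inl x')) < Phi k l σ τ (eKL k l (Sum.inr y))) then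
        dotP (simpleRoot 3 (uKL k l (eKL k l (Sum.inl x')))) (simpleRoot 3 2) else 0)
      = (-1 : ℤ) := by
    intro x'
    rw [if_pos ⟨eKL_inl_le_inr k l x' y, by
      rw [Phi_inl, Phi_inr]; exact eKL_inl_lt_inr k l (σ x') (τ y)⟩, uKL_inl, dot12]
  have hr : ∀ y' : Fin l,
      (if (eKL k l (Sum.inr y') ≤ eKL k l (Sum.inr y)
          ∧ Phi k l σ τ (eKL k l (Sum.inr y')) < Phi k l σ τ (eKL k l (Sum.inr y))) then
        dotP (simpleRoot 3 (uKL k l (eKL k l (Sum.inr y')))) (simpleRoot 3 2) else 0)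
      = (if (y' ≤ y ∧ τ y' < τ y) then (2:ℤ) else 0) := by
    intro y'
    refine if_congr ?_ (by rw [uKL_inr, dot22]) rfl
    rw [Phi_inr, Phi_inr, eKL_inr_le_inr, eKL_inr_lt_inr]
  rw [Finset.sum_congr rfl fun x' _ => hl x', Finset.sum_congr rfl fun y' _ => hr y',
    Finset.sum_const, ← Finset.sum_filter, Finset.sum_const, nsmul_eq_mul, nsmul_eq_mul,
    Finset.card_univ, Fintype.card_fin, stat]
  push_cast
  ring

/-! ### factorization of Xsig -/

lemma Xsig_Phi (n k l : ℕ) (σ : Equiv.Perm (Fin (k+l))) (τ : Equiv.Perm (Fin l)) :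
    Xsig (LambdaVec 3 n 1) (Phi k l σ τ) (uKL k l)
      = (∏ x : Fin (k+l),
            qint ((n:ℤ) - 2*(stat σ x : ℤ)) * T ((n:ℤ) - 2*((x:ℕ):ℤ) - 1))
        * (∏ y : Fin l,
            qint (((k:ℤ)+(l:ℤ)) - 2*(stat τ y : ℤ)) * T (((k:ℤ)+(l:ℤ)) - 2*((y:ℕ):ℤ) - 1)) := by
  rw [Xsig,
    ← Equiv.prod_comp (eKL k l)
      (fun t => qint (Nwt (LambdaVec 3 n 1) (Phi k l σ τ) (uKL k l) t)
        * T (Nwt (LambdaVec 3 n 1) 1 (uKL k l) t - 1)),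
    Fintype.prod_sum_type]
  congr 1
  · refine Finset.prod_congr rfl fun x _ => ?_
    rw [Nwt_Phi_inl, ← Phi_one k l, Nwt_Phi_inl, stat_one]
  · refine Finset.prod_congr rfl fun y _ => ?_
    rw [Nwt_Phi_inr, ← Phi_one k l, Nwt_Phi_inr, stat_one]
/-! ### the bijection Sset ≃ pairs of permutations -/

lemma Phi_mem_Sset (k l : ℕ) (σ : Equiv.Perm (Fin (k+l))) (τ : Equiv.Perm (Fin l)) :
    Phi k l σ τ ∈ Sset (uKL k l) (uKL k l) := by
  rw [Sset, Finset.mem_filter]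
  refine ⟨Finset.mem_univ _, fun j => ?_⟩
  obtain ⟨z, rfl⟩ := (eKL k l).surjective j
  cases z with
  | inl x => rw [Phi_inl, uKL_inl, uKL_inl]
  | inr y => rw [Phi_inr, uKL_inr, uKL_inr]

lemma sum_Sset (n k l : ℕ) :
    ∑ ρ ∈ Sset (uKL k l) (uKL k l), Xsig (LambdaVec 3 n 1) ρ (uKL k l)
      = ∑ στ : Equiv.Perm (Fin (k+l)) × Equiv.Perm (Fin l),
          Xsig (LambdaVec 3 n 1) (Phi k l στ.1 στ.2) (uKL k l) := by
  symm
  refine Finset.sum_bij (fun στ _ => Phi k l στ.1 στ.2)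
    (fun στ _ => Phi_mem_Sset k l στ.1 στ.2) ?_ ?_ (fun στ _ => rfl)
  · intro a _ b _ h
    have h1 : a.1 = b.1 := by
      apply Equiv.ext
      intro x
      have hx := congrArg (fun ρ : Equiv.Perm (Fin (k+2*l)) => ρ (eKL k l (Sum.inl x))) h
      simp only [Phi_inl] at hx
      exact Sum.inl.inj ((eKL k l).injective hx)
    have h2 : a.2 = b.2 := by
      apply Equiv.ext
      intro y
      have hy := congrArg (fun ρ : Equiv.Perm (Fin (k+2*l)) => ρ (eKL k l (Sum.inr y))) h
      simp only [Phi_inr] at hy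
      exact Sum.inr.inj ((eKL k l).injective hy)
    exact Prod.ext h1 h2
  · intro ρ hρ
    rw [Sset, Finset.mem_filter] at hρ
    have hc := hρ.2
    have hL : ∀ x : Fin (k+l), (ρ (eKL k l (Sum.inl x)) : ℕ) < k + l := by
      intro x
      by_contra hx
      have h1 := hc (eKL k l (Sum.inl x))
      rw [uKL_inl, uKL, if_neg hx] at h1
      omega
    have hR : ∀ y : Fin l, k + l ≤ (ρ (eKL k l (Sum.inr y)) : ℕ) := by
      intro y
      by_contra hy
      have h1 := hc (eKL k l (Sum.inr y))
      rw [uKL_inr, uKL, if_pos (by omega)] at h1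
      omega
    have hfinj : Function.Injective (fun x : Fin (k+l) =>
        (⟨(ρ (eKL k l (Sum.inl x)) : ℕ), hL x⟩ : Fin (k+l))) := by
      intro a b hab
      simp only [Fin.mk.injEq] at hab
      exact Sum.inl.inj ((eKL k l).injective (ρ.injective (Fin.ext hab)))
    have hginj : Function.Injective (fun y : Fin l =>
        (⟨(ρ (eKL k l (Sum.inr y)) : ℕ) - (k + l), by
          have h1 := (ρ (eKL k l (Sum.inr y))).isLt
          have h2 := hR y
          omega⟩ : Fin l)) := by
      intro a b hab
      simp only [Fin.mk.injEq] at hab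
      have h1 : (ρ (eKL k l (Sum.inr a)) : ℕ) = (ρ (eKL k l (Sum.inr b)) : ℕ) := by
        have := hR a; have := hR b; omega
      exact Sum.inr.inj ((eKL k l).injective (ρ.injective (Fin.ext h1)))
    refine ⟨(Equiv.ofBijective _ ((Finite.injective_iff_bijective).mp hfinj),
             Equiv.ofBijective _ ((Finite.injective_iff_bijective).mp hginj)),
            Finset.mem_univ _, ?_⟩
    apply Equiv.ext
    intro j
    obtain ⟨z, rfl⟩ := (eKL k l).surjective j
    cases z with
    | inl x =>
        rw [Phi_inl]
        apply Fin.ext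
        rw [eKL_inl]
        rfl
    | inr y =>
        rw [Phi_inr]
        apply Fin.ext
        rw [eKL_inr]
        show k + l + ((ρ (eKL k l (Sum.inr y)) : ℕ) - (k + l)) = _
        have := hR y
        omega

lemma pairing_eq (n k l : ℕ) :
    pairing (LambdaVec 3 n 1) (uKL k l) (uKL k l)
      = (∑ σ : Equiv.Perm (Fin (k+l)),
            ∏ x : Fin (k+l), qint ((n:ℤ) - 2*(stat σ x : ℤ)) * T ((n:ℤ) - 2*((x:ℕ):ℤ) - 1))
        * (∑ τ : Equiv.Perm (Fin l),
            ∏ y : Fin l, qint (((k:ℤ)+(l:ℤ)) - 2*(stat τ y : ℤ))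
              * T (((k:ℤ)+(l:ℤ)) - 2*((y:ℕ):ℤ) - 1)) := by
  rw [pairing, sum_Sset n k l]
  rw [Finset.sum_congr rfl fun στ _ => Xsig_Phi n k l στ.1 στ.2]
  rw [Fintype.sum_prod_type]
  have hp : ∀ σ : Equiv.Perm (Fin (k+l)),
      (∑ τ : Equiv.Perm (Fin l),
        (∏ x : Fin (k+l), qint ((n:ℤ) - 2*(stat σ x : ℤ)) * T ((n:ℤ) - 2*((x:ℕ):ℤ) - 1))
          * (∏ y : Fin l, qint (((k:ℤ)+(l:ℤ)) - 2*(stat τ y : ℤ))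
              * T (((k:ℤ)+(l:ℤ)) - 2*((y:ℕ):ℤ) - 1)))
      = (∏ x : Fin (k+l), qint ((n:ℤ) - 2*(stat σ x : ℤ)) * T ((n:ℤ) - 2*((x:ℕ):ℤ) - 1))
          * (∑ τ : Equiv.Perm (Fin l),
              ∏ y : Fin l, qint (((k:ℤ)+(l:ℤ)) - 2*(stat τ y : ℤ))
                * T (((k:ℤ)+(l:ℤ)) - 2*((y:ℕ):ℤ) - 1)) :=
    fun σ => (Finset.mul_sum _ _ _).symm
  rw [Finset.sum_congr rfl fun σ _ => hp σ, ← Finset.sum_mul]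


/-- Closed formula evaluation of the digon web: for `Λ = (n,0,0)` and
`ū = (1,…,1,2,…,2)` with `k+l` ones and `l` twos,
`⟪ū,ū⟫ = q^(-d)·([k+l]!)²·([l]!)²·[k+l choose l]·[n choose k+l]` where
`d = -(n(n-1) - (n-k-l)(n-k-l-1) - k(k-1) - l(l-1))/2` and the quantum binomials
`binom₁ = [k+l choose l]`, `binom₂ = [n choose k+l]` are characterized by
`binom₁·[l]! = [k+l]⋯[k+1]` and `binom₂·[k+l]! = [n]⋯[n-k-l+1]`. -/
theorem digon_evaluation (n k l : ℕ) (hn : 1 ≤ n) (hkl : k + l ≤ n)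
    (d : ℤ)
    (hd : 2 * d = -((n : ℤ) * (n - 1) - ((n : ℤ) - k - l) * ((n : ℤ) - k - l - 1)
      - (k : ℤ) * (k - 1) - (l : ℤ) * (l - 1)))
    (binom₁ binom₂ : LaurentPolynomial ℤ)
    (hbinom₁ : binom₁ * qfac l = ∏ i ∈ Finset.range l, qint (((k : ℤ) + l) - i))
    (hbinom₂ : binom₂ * qfac (k + l) = ∏ i ∈ Finset.range (k + l), qint ((n : ℤ) - i)) :
    pairing (LambdaVec 3 n 1)
        (fun t : Fin (k + 2 * l) => if (t : ℕ) < k + l then 1 else 2)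
        (fun t : Fin (k + 2 * l) => if (t : ℕ) < k + l then 1 else 2)
      = T (-d) * (qfac (k + l)) ^ 2 * (qfac l) ^ 2 * binom₁ * binom₂ := by
  have hu : (fun t : Fin (k + 2 * l) => if (t : ℕ) < k + l then 1 else 2) = uKL k l := rfl
  rw [hu, pairing_eq n k l, block_eval (k+l) (n:ℤ), block_eval l ((k:ℤ)+(l:ℤ)),
    ← hbinom₂, ← hbinom₁]
  have hTT : (T (((k+l : ℕ):ℤ)*(n:ℤ) - ((k+l : ℕ):ℤ)*((k+l : ℕ):ℤ)) : LaurentPolynomial ℤ)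
      * T ((l:ℤ)*((k:ℤ)+(l:ℤ)) - (l:ℤ)*(l:ℤ)) = T (-d) := by
    rw [← T_add]
    congr 1
    have h2 : 2 * ((((k+l : ℕ):ℤ)*(n:ℤ) - ((k+l : ℕ):ℤ)*((k+l : ℕ):ℤ))
        + ((l:ℤ)*((k:ℤ)+(l:ℤ)) - (l:ℤ)*(l:ℤ))) = 2 * (-d) := by
      push_cast
      linear_combination hd
    exact mul_left_cancel₀ two_ne_zero h2
  calc (T (((k+l : ℕ):ℤ)*(n:ℤ) - ((k+l : ℕ):ℤ)*((k+l : ℕ):ℤ)) : LaurentPolynomial ℤ)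
          * (qfac (k+l) * (binom₂ * qfac (k+l)))
        * (T ((l:ℤ)*((k:ℤ)+(l:ℤ)) - (l:ℤ)*(l:ℤ)) * (qfac l * (binom₁ * qfac l)))
      = (T (((k+l : ℕ):ℤ)*(n:ℤ) - ((k+l : ℕ):ℤ)*((k+l : ℕ):ℤ))
          * T ((l:ℤ)*((k:ℤ)+(l:ℤ)) - (l:ℤ)*(l:ℤ)))
        * ((qfac (k+l))^2 * (qfac l)^2 * binom₁ * binom₂) := by ring
    _ = T (-d) * (qfac (k + l)) ^ 2 * (qfac l) ^ 2 * binom₁ * binom₂ := by rw [hTT]; ring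
end
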